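/- arXiv:1206.4398 — 2 statements merged into one kernel-verified Lean document; each statement's English description precedes it below -/
import Mathlib

section
/- If Γ is a finite abelian group and S, T are nonempty sets in B(Γ), then the sumset S + T belongs to B(Γ). -/
/-!
In a finite group of order `N`, a set lies in `B(Γ)` exactly when it is a union of atoms (classes
of elements generating the same cyclic subgroup): an atom is a cyclic subgroup minus its finitely
many proper subgroups, and every generated set is a union of atoms by induction. Two generators of
the same cyclic subgroup differ by a multiplier `m` coprime to `N` (lift a unit modulo the order of
the element to a unit modulo `N`), so the unions of atoms are exactly the sets stable under all
maps `a ↦ m • a` with `m` coprime to `N`. In an abelian group these maps are additive, so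
stability passes from `S` and `T` to `S + T`.
-/

open Pointwise

/-- The Boolean algebra of subsets of `Γ` generated by the subgroups of `Γ`. -/
inductive InB (Γ : Type*) [AddGroup Γ] : Set Γ → Prop
  | subgroup (H : AddSubgroup Γ) : InB Γ (H : Set Γ)
  | compl {S : Set Γ} : InB Γ S → InB Γ Sᶜ
  | union {S T : Set Γ} : InB Γ S → InB Γ T → InB Γ (S ∪ T)

/-- `Atom a` is the set of elements generating the same cyclic subgroup as `a`. -/
def Atom {Γ : Type*} [AddGroup Γ] (a : Γ) : Set Γ :=
  {b | AddSubgroup.zmultiples a = AddSubgroup.zmultiples b}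

theorem Nat.exists_coprime_modEq_of_dvd {n N k : ℕ} [NeZero N] (hnN : n ∣ N)
    (hk : k.Coprime n) : ∃ m, m.Coprime N ∧ m ≡ k [MOD n] := by
  obtain ⟨v, hv⟩ := ZMod.unitsMap_surjective hnN (ZMod.unitOfCoprime k hk)
  refine ⟨(v : ZMod N).val, ZMod.val_coe_unit_coprime v,
    (ZMod.natCast_eq_natCast_iff _ _ _).1 ?_⟩
  rw [ZMod.natCast_val]
  exact congrArg Units.val hv

namespace InB

variable {Γ : Type*} [AddGroup Γ] {S T : Set Γ}

theorem empty : InB Γ ∅ := by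
  simpa using (subgroup (⊤ : AddSubgroup Γ)).compl

theorem inter (hS : InB Γ S) (hT : InB Γ T) : InB Γ (S ∩ T) := by
  simpa [Set.compl_union] using (hS.compl.union hT.compl).compl

theorem diff (hS : InB Γ S) (hT : InB Γ T) : InB Γ (S \ T) :=
  hS.inter hT.compl

theorem sUnion {F : Set (Set Γ)} (hF : F.Finite) (h : ∀ S ∈ F, InB Γ S) :
    InB Γ (⋃₀ F) := by
  induction F, hF using Set.Finite.induction_on with
  | empty => simpa using empty
  | insert _ _ ih =>
    rw [Set.sUnion_insert]
    exact (h _ (Set.mem_insert _ _)).union (ih fun S hS => h S (Set.mem_insert_of_mem _ hS))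

theorem atom_subset (hS : InB Γ S) {a : Γ} (ha : a ∈ S) : Atom a ⊆ S := by
  induction hS generalizing a with
  | subgroup H =>
    intro b hb
    exact AddSubgroup.zmultiples_le_of_mem ha (hb ▸ AddSubgroup.mem_zmultiples b)
  | compl _ ih =>
    intro b hb hbS
    exact ha (ih hbS hb.symm)
  | union _ _ ih₁ ih₂ =>
    rcases ha with ha | ha
    · exact (ih₁ ha).trans Set.subset_union_left
    · exact (ih₂ ha).trans Set.subset_union_right

end InB

section Atom

variable {Γ : Type*} [AddGroup Γ]

theorem atom_eq_diff (a : Γ) :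
    Atom a = (AddSubgroup.zmultiples a : Set Γ) \
      ⋃₀ ((↑) '' {H : AddSubgroup Γ | H < AddSubgroup.zmultiples a}) := by
  ext b
  simp only [Atom, Set.mem_ofPred_eq, Set.mem_sdiff, SetLike.mem_coe, Set.sUnion_image,
    Set.mem_iUnion, exists_prop, not_exists, not_and]
  constructor
  · intro hab
    refine ⟨hab ▸ AddSubgroup.mem_zmultiples b, fun H hH hbH => ?_⟩
    exact (hH.trans_le hab.le).not_ge (AddSubgroup.zmultiples_le_of_mem hbH)
  · rintro ⟨hba, hb⟩
    refine ((AddSubgroup.zmultiples_le_of_mem hba).lt_or_eq.resolve_left fun hlt => ?_).symm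
    exact hb _ hlt (AddSubgroup.mem_zmultiples b)

theorem inB_atom [Finite Γ] (a : Γ) : InB Γ (Atom a) := by
  rw [atom_eq_diff]
  exact (InB.subgroup _).diff
    (InB.sUnion (Set.toFinite _) (by rintro _ ⟨H, -, rfl⟩; exact .subgroup H))

theorem nsmul_mem_atom {a : Γ} {m : ℕ} (hm : m.Coprime (addOrderOf a)) : m • a ∈ Atom a := by
  obtain ⟨k, hk⟩ := exists_nsmul_eq_self_of_coprime hm
  have ha : a ∈ AddSubgroup.zmultiples (m • a) := by
    simpa only [hk] using AddSubgroup.nsmul_mem_zmultiples (m • a) k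
  exact le_antisymm (AddSubgroup.zmultiples_le_of_mem ha)
    (AddSubgroup.zmultiples_le_of_mem (AddSubgroup.nsmul_mem_zmultiples a m))

theorem exists_coprime_nsmul_eq_of_mem_atom [Finite Γ] {a b : Γ} (hb : b ∈ Atom a) :
    ∃ m : ℕ, m.Coprime (Nat.card Γ) ∧ m • a = b := by
  have hba : b ∈ AddSubgroup.zmultiples a := hb ▸ AddSubgroup.mem_zmultiples b
  obtain ⟨k, rfl⟩ :=
    (AddSubmonoid.mem_multiples_iff _ _).1 (mem_multiples_iff_mem_zmultiples.2 hba)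
  have hord : addOrderOf (k • a) = addOrderOf a := by
    rw [← Nat.card_zmultiples, ← Nat.card_zmultiples, ← hb]
  have hk : k.Coprime (addOrderOf a) := by
    rw [addOrderOf_nsmul, Nat.div_eq_self] at hord
    exact Nat.coprime_comm.1 (hord.resolve_left (addOrderOf_pos a).ne')
  obtain ⟨m, hm, hmk⟩ := Nat.exists_coprime_modEq_of_dvd (addOrderOf_dvd_natCard a) hk
  exact ⟨m, hm, nsmul_eq_nsmul_iff_modEq.2 hmk⟩

theorem inB_iff_forall_nsmul_mem [Finite Γ] {S : Set Γ} :
    InB Γ S ↔ ∀ m : ℕ, m.Coprime (Nat.card Γ) → ∀ a ∈ S, m • a ∈ S := by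
  constructor
  · intro hS m hm a ha
    exact hS.atom_subset ha (nsmul_mem_atom (hm.coprime_dvd_right (addOrderOf_dvd_natCard a)))
  · intro hS
    have hS_eq : S = ⋃₀ (Atom '' S) := by
      refine subset_antisymm (fun a ha => ⟨Atom a, ⟨a, ha, rfl⟩, rfl⟩) ?_
      rintro b ⟨_, ⟨a, ha, rfl⟩, hb⟩
      obtain ⟨m, hm, rfl⟩ := exists_coprime_nsmul_eq_of_mem_atom hb
      exact hS m hm a ha
    rw [hS_eq]
    exact InB.sUnion (Set.toFinite _) (by rintro _ ⟨a, -, rfl⟩; exact inB_atom a)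

end Atom

theorem sumset_mem_B_general {Γ : Type*} [AddCommGroup Γ] [Fintype Γ]
    (S T : Set Γ) (hS : InB Γ S) (hT : InB Γ T) :
    InB Γ (S + T) := by
  rw [inB_iff_forall_nsmul_mem] at hS hT ⊢
  rintro m hm _ ⟨s, hs, t, ht, rfl⟩
  rw [nsmul_add]
  exact Set.add_mem_add (hS m hm s hs) (hT m hm t ht)

theorem sumset_mem_B {Γ : Type*} [AddCommGroup Γ] [Fintype Γ]
    (S T : Set Γ) (hS : InB Γ S) (hT : InB Γ T)
    (hSne : S.Nonempty) (hTne : T.Nonempty) :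
    InB Γ (S + T) :=
  sumset_mem_B_general S T hS hT
end

section
/- Let Γ be a finite group and f : Γ → ℂ a function such that f(H) := Σ_{h ∈ H} f(h) is an integer for every cyclic subgroup H of Γ. Then f(S) = Σ_{s ∈ S} f(s) is an integer for every set S ∈ B(Γ). -/
open Pointwise

section Aux

variable {Γ : Type*} [AddGroup Γ]

lemma mem_atom_iff (a b : Γ) :
    b ∈ Atom a ↔ AddSubgroup.zmultiples a = AddSubgroup.zmultiples b := Iff.rfl

lemma self_mem_atom (a : Γ) : a ∈ Atom a := rfl

lemma atom_eq_iff (a b : Γ) :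
    Atom a = Atom b ↔ AddSubgroup.zmultiples a = AddSubgroup.zmultiples b := by
  constructor
  · intro h
    have : b ∈ Atom a := h ▸ self_mem_atom b
    exact this
  · intro h
    ext c
    simp only [mem_atom_iff, h]

lemma atom_subset_zmultiples (a : Γ) : Atom a ⊆ (AddSubgroup.zmultiples a : Set Γ) := by
  intro c hc
  have : c ∈ AddSubgroup.zmultiples c := AddSubgroup.mem_zmultiples c
  rwa [← hc] at this

/-- `S` is a union of atoms. -/
def AtomUnion (S : Set Γ) : Prop := ∀ a ∈ S, Atom a ⊆ S

lemma atomUnion_of_inB {S : Set Γ} (h : InB Γ S) : AtomUnion S := by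
  induction h with
  | subgroup H =>
    intro a ha b hb
    have h1 : AddSubgroup.zmultiples a ≤ H := (AddSubgroup.zmultiples_le).2 ha
    have : b ∈ AddSubgroup.zmultiples b := AddSubgroup.mem_zmultiples b
    rw [← hb] at this
    exact h1 this
  | compl hS ih =>
    intro a ha b hb hbS
    have hab : a ∈ Atom b := ((mem_atom_iff a b).1 hb).symm
    exact ha (ih b hbS hab)
  | union hS hT ihS ihT =>
    intro a ha b hb
    rcases ha with ha | ha
    · exact Or.inl (ihS a ha hb)
    · exact Or.inr (ihT a ha hb)

open scoped Classical in
lemma int_sum {ι : Type*} (s : Finset ι) (g : ι → ℂ)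
    (h : ∀ i ∈ s, ∃ k : ℤ, g i = (k : ℂ)) : ∃ k : ℤ, ∑ i ∈ s, g i = (k : ℂ) := by
  classical
  induction s using Finset.induction with
  | empty => exact ⟨0, by simp⟩
  | @insert i s hni ih =>
    obtain ⟨k, hk⟩ := h i (Finset.mem_insert_self i s)
    obtain ⟨m, hm⟩ := ih fun j hj => h j (Finset.mem_insert_of_mem hj)
    exact ⟨k + m, by rw [Finset.sum_insert hni, hk, hm]; push_cast; ring⟩

variable [Fintype Γ]

open scoped Classical in
/-- Fiberwise decomposition of a sum over a union of atoms. -/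
lemma sum_atomUnion (f : Γ → ℂ) {S : Set Γ} (hS : AtomUnion S) :
    ∑ s ∈ S.toFinset, f s
      = ∑ A ∈ S.toFinset.image Atom, ∑ s ∈ A.toFinset, f s := by
  classical
  rw [← Finset.sum_fiberwise_of_maps_to (g := Atom) (fun x hx => Finset.mem_image_of_mem _ hx) f]
  refine Finset.sum_congr rfl ?_
  intro A hA
  obtain ⟨b, hb, rfl⟩ := Finset.mem_image.1 hA
  have hbS : b ∈ S := Set.mem_toFinset.1 hb
  congr 1
  ext x
  simp only [Finset.mem_filter, Set.mem_toFinset]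
  constructor
  · rintro ⟨_, hx⟩
    exact hx ▸ self_mem_atom x
  · intro hx
    have hax : Atom x = Atom b := (atom_eq_iff x b).2 ((mem_atom_iff b x).1 hx).symm
    exact ⟨hS b hbS hx, hax⟩

open scoped Classical in
lemma atom_integral (f : Γ → ℂ)
    (hf : ∀ a : Γ, ∃ k : ℤ, ∑ h : AddSubgroup.zmultiples a, f h = (k : ℂ)) :
    ∀ (n : ℕ) (a : Γ), (AddSubgroup.zmultiples a : Set Γ).toFinset.card ≤ n →
      ∃ k : ℤ, ∑ s ∈ (Atom a).toFinset, f s = (k : ℂ) := by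
  classical
  intro n
  induction n with
  | zero =>
    intro a ha
    exfalso
    have : a ∈ (AddSubgroup.zmultiples a : Set Γ).toFinset :=
      Set.mem_toFinset.2 (AddSubgroup.mem_zmultiples a)
    have := Finset.card_pos.2 ⟨a, this⟩
    omega
  | succ n ih =>
    intro a ha
    set H : Set Γ := (AddSubgroup.zmultiples a : Set Γ) with hH
    have hAU : AtomUnion H := atomUnion_of_inB (InB.subgroup _)
    obtain ⟨k, hk⟩ := hf a
    have hsum : ∑ s ∈ H.toFinset, f s = (k : ℂ) := by
      rw [← hk, ← Finset.sum_set_coe]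
      rfl
    rw [sum_atomUnion f hAU] at hsum
    have haH : Atom a ∈ H.toFinset.image Atom :=
      Finset.mem_image_of_mem _ (Set.mem_toFinset.2 (AddSubgroup.mem_zmultiples a))
    rw [← Finset.sum_erase_add _ _ haH] at hsum
    have hrest : ∃ m : ℤ,
        ∑ A ∈ (H.toFinset.image Atom).erase (Atom a), ∑ s ∈ A.toFinset, f s = (m : ℂ) := by
      apply int_sum
      intro A hA
      obtain ⟨hAne, hAmem⟩ := Finset.mem_erase.1 hA
      obtain ⟨b, hb, rfl⟩ := Finset.mem_image.1 hAmem
      have hbH : b ∈ AddSubgroup.zmultiples a := Set.mem_toFinset.1 hb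
      have hle : AddSubgroup.zmultiples b ≤ AddSubgroup.zmultiples a :=
        AddSubgroup.zmultiples_le.2 hbH
      have hne : AddSubgroup.zmultiples b ≠ AddSubgroup.zmultiples a := by
        intro h
        exact hAne ((atom_eq_iff b a).2 h)
      have hss : (AddSubgroup.zmultiples b : Set Γ) ⊂ (AddSubgroup.zmultiples a : Set Γ) :=
        HasSubset.Subset.ssubset_of_ne (by exact_mod_cast hle)
          (by simpa using fun h => hne (SetLike.coe_injective h))
      have hcard : (AddSubgroup.zmultiples b : Set Γ).toFinset.card < H.toFinset.card :=
        Finset.card_lt_card (Set.toFinset_ssubset_toFinset.2 hss)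
      exact ih b (by omega)
    obtain ⟨m, hm⟩ := hrest
    refine ⟨k - m, ?_⟩
    rw [hm] at hsum
    push_cast
    linear_combination hsum

end Aux

open scoped Classical in
theorem f_integral_of_cyclic_subgroups_f_integral {Γ : Type*} [AddGroup Γ] [Fintype Γ]
    (f : Γ → ℂ)
    (hf : ∀ a : Γ, ∃ k : ℤ, ∑ h : AddSubgroup.zmultiples a, f h = (k : ℂ))
    (S : Set Γ) (hS : InB Γ S) :
    ∃ k : ℤ, ∑ s ∈ S.toFinset, f s = (k : ℂ) := by
  classical
  have hAU : AtomUnion S := atomUnion_of_inB hS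
  rw [sum_atomUnion f hAU]
  apply int_sum
  intro A hA
  obtain ⟨b, hb, rfl⟩ := Finset.mem_image.1 hA
  exact atom_integral f hf _ b le_rfl
end
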